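/- arXiv:1101.1781 — 5 statements merged into one kernel-verified Lean document; each statement's English description precedes it below -/
import Mathlib

section
/- Let n ≥ 2 and let a_1 ≥ a_2 ≥ ... ≥ a_n ≥ 1 be integers with a_1 ≤ n - 1. Set t = a_2 + a_3 + ... + a_n and let I = (x_1^{a_1}, ..., x_n^{a_n}) in S = k[x_1,...,x_n]. Then the ideal I_{≥t} generated by all monomials of I of degree ≥ t equals (x_1,...,x_n)^t, the t-th power of the maximal graded ideal. -/
open MvPolynomial

noncomputable section

/-- The ideal generated by all monomials of `I` of total degree at least `t`. -/
def trunc {K : Type*} [Field K] {n : ℕ} (I : Ideal (MvPolynomial (Fin n) K)) (t : ℕ) :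
    Ideal (MvPolynomial (Fin n) K) :=
  Ideal.span { p | ∃ v : Fin n →₀ ℕ, p = monomial v (1 : K) ∧ p ∈ I ∧ t ≤ v.sum fun _ e => e }

/-- A monomial ideal `J` is stable if for every monomial `x^v ∈ J` and every `j < m(v)`,
where `m(v)` is the largest index of a variable dividing `x^v`, the monomial
`x_j · x^v / x_{m(v)}` also lies in `J`. -/
def IsStable {K : Type*} [Field K] {n : ℕ} (J : Ideal (MvPolynomial (Fin n) K)) : Prop :=
  ∀ v : Fin n →₀ ℕ, monomial v (1 : K) ∈ J →
    ∀ m : Fin n, m ∈ v.support → (∀ i ∈ v.support, i ≤ m) →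
      ∀ j : Fin n, j < m →
        monomial (v - Finsupp.single m 1 + Finsupp.single j 1) (1 : K) ∈ J

/-! A monomial of degree `t = ∑ aᵢ - a₁` avoiding `I` would have every exponent `vᵢ ≤ aᵢ - 1`,
hence degree at most `∑ aᵢ - n = t + a₁ - n < t` because `a₁ ≤ n - 1`. So `I` contains every
monomial of degree `t`, and its truncation at `t` is all of `(x₁, …, xₙ)^t`. -/

theorem Finsupp.degree_add_card_le_sum_of_forall_lt {σ : Type*} [Fintype σ] {v : σ →₀ ℕ}
    {a : σ → ℕ} (h : ∀ i, v i < a i) : v.degree + Fintype.card σ ≤ ∑ i, a i :=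
  calc v.degree + Fintype.card σ = ∑ i, (v i + 1) := by
        simp [Finsupp.degree_eq_sum, Finset.sum_add_distrib]
    _ ≤ ∑ i, a i := Finset.sum_le_sum fun i _ => h i

namespace MvPolynomial

theorem monomial_one_mem_span_X_pow_iff {σ R : Type*} [CommSemiring R] [Nontrivial R]
    (a : σ → ℕ) (v : σ →₀ ℕ) :
    monomial v (1 : R) ∈ Ideal.span (Set.range fun i => (X i : MvPolynomial σ R) ^ a i) ↔
      ∃ i, a i ≤ v i := by
  have hgen : (Set.range fun i => (X i : MvPolynomial σ R) ^ a i) =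
      (monomial · 1) '' Set.range fun i => Finsupp.single i (a i) := by
    rw [← Set.range_comp]
    simp only [Function.comp_def, X_pow_eq_monomial]
  classical
  simp [hgen, mem_ideal_span_monomial_image, support_monomial, Finsupp.single_le_iff]

theorem trunc_eq_pow_idealOfVars {K : Type*} [Field K] {n : ℕ}
    {I : Ideal (MvPolynomial (Fin n) K)} {t : ℕ}
    (h : ∀ v : Fin n →₀ ℕ, v.degree = t → monomial v (1 : K) ∈ I) :
    trunc I t = idealOfVars (Fin n) K ^ t := by
  apply le_antisymm
  · rw [trunc, Ideal.span_le]
    rintro _ ⟨v, rfl, -, hv⟩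
    exact (monomial_mem_pow_idealOfVars_iff t v one_ne_zero).mpr hv
  · rw [pow_idealOfVars_eq_span, Ideal.span_le]
    rintro _ ⟨v, hv, rfl⟩
    exact Ideal.subset_span ⟨v, rfl, h v hv, le_of_eq hv.symm⟩

end MvPolynomial

/-- For `n ≥ 2`, `a_1 ≥ ⋯ ≥ a_n ≥ 1` with `a_1 ≤ n-1` and
`t = a_2 + ⋯ + a_n`, the truncation `I_{≥t}` of `I = (x_1^{a_1},…,x_n^{a_n})`
equals `(x_1,…,x_n)^t`. -/
theorem stmt0 {K : Type*} [Field K] {n : ℕ} (hn : 2 ≤ n) (a : Fin n → ℕ)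
    (hbound : a ⟨0, by omega⟩ ≤ n - 1) :
    trunc (Ideal.span (Set.range fun i : Fin n => (X i : MvPolynomial (Fin n) K) ^ a i))
        (∑ i ∈ Finset.univ.erase (⟨0, by omega⟩ : Fin n), a i)
      = (Ideal.span (Set.range (X : Fin n → MvPolynomial (Fin n) K))) ^
          (∑ i ∈ Finset.univ.erase (⟨0, by omega⟩ : Fin n), a i) := by
  refine trunc_eq_pow_idealOfVars fun v hv => ?_
  rw [monomial_one_mem_span_X_pow_iff]
  by_contra! hlt
  have hdeg := Finsupp.degree_add_card_le_sum_of_forall_lt hlt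
  rw [← Finset.add_sum_erase _ a (Finset.mem_univ ⟨0, by omega⟩), hv, Fintype.card_fin] at hdeg
  omega
end
end

section
/- If I and J are monomial ideals in S = k[x_1,...,x_n] such that I_{≥p} and J_{≥q} are stable ideals, then (I ∩ J)_{≥max(p,q)} is a stable ideal. -/
/-!
A monomial `x^v` lies in `I_{≥t}` exactly when it lies in `I` and has degree at least `t`, and the
stability move `x^v ↦ x_j x^v / x_{m(v)}` preserves degree. Hence stability of `I_{≥p}` passes to
`I_{≥t}` for every `t ≥ p`, and truncations at a common degree `t` that are stable have a stable
intersection `(I ∩ J)_{≥t}`.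
-/

open MvPolynomial

noncomputable section

namespace Finsupp

theorem degree_tsub_single_add_single {σ : Type*} {v : σ →₀ ℕ} {m : σ} (hm : m ∈ v.support)
    (j : σ) : (v - single m 1 + single j 1).degree = v.degree := by
  have hle : single m 1 ≤ v :=
    single_le_iff.mpr (Nat.one_le_iff_ne_zero.mpr (mem_support_iff.mp hm))
  have hsplit := congrArg degree (tsub_add_cancel_of_le hle)
  simp only [map_add, degree_single] at hsplit ⊢
  omega

end Finsupp

section Truncation

variable {K : Type*} [Field K] {n : ℕ}

theorem monomial_mem_trunc_iff (I : Ideal (MvPolynomial (Fin n) K)) (t : ℕ) (v : Fin n →₀ ℕ) :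
    monomial v (1 : K) ∈ trunc I t ↔ monomial v (1 : K) ∈ I ∧ t ≤ v.degree := by
  have hgens : { p | ∃ u : Fin n →₀ ℕ, p = monomial u (1 : K) ∧ p ∈ I ∧ t ≤ u.sum fun _ e => e }
      = (fun u => monomial u (1 : K)) '' {u | monomial u (1 : K) ∈ I ∧ t ≤ u.degree} := by
    ext p
    constructor
    · rintro ⟨u, rfl, huI, hut⟩
      exact ⟨u, ⟨huI, hut⟩, rfl⟩
    · rintro ⟨u, ⟨huI, hut⟩, rfl⟩
      exact ⟨u, rfl, huI, hut⟩
  classical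
  rw [trunc, hgens, mem_ideal_span_monomial_image, support_monomial, if_neg one_ne_zero]
  simp only [Finset.mem_singleton, forall_eq, Set.mem_ofPred_eq]
  constructor
  · rintro ⟨u, ⟨huI, hut⟩, huv⟩
    obtain ⟨w, rfl⟩ := exists_add_of_le huv
    refine ⟨?_, hut.trans (Finsupp.degree_mono le_self_add)⟩
    rw [add_comm, ← one_mul (1 : K), ← monomial_mul]
    exact I.mul_mem_left _ huI
  · rintro ⟨hvI, hvt⟩
    exact ⟨v, ⟨hvI, hvt⟩, le_rfl⟩

theorem IsStable.trunc_of_le {I : Ideal (MvPolynomial (Fin n) K)} {p t : ℕ}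
    (hI : IsStable (trunc I p)) (hpt : p ≤ t) : IsStable (trunc I t) := by
  intro v hv m hm hmax j hj
  rw [monomial_mem_trunc_iff] at hv ⊢
  have hshift := hI v ((monomial_mem_trunc_iff I p v).mpr ⟨hv.1, hpt.trans hv.2⟩) m hm hmax j hj
  rw [Finsupp.degree_tsub_single_add_single hm]
  exact ⟨((monomial_mem_trunc_iff I p _).mp hshift).1, hv.2⟩

theorem IsStable.trunc_inf {I J : Ideal (MvPolynomial (Fin n) K)} {t : ℕ}
    (hI : IsStable (trunc I t)) (hJ : IsStable (trunc J t)) : IsStable (trunc (I ⊓ J) t) := by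
  intro v hv m hm hmax j hj
  obtain ⟨⟨hvI, hvJ⟩, hvt⟩ := (monomial_mem_trunc_iff _ t v).mp hv
  obtain ⟨hwI, hwt⟩ := (monomial_mem_trunc_iff I t _).mp
    (hI v ((monomial_mem_trunc_iff I t v).mpr ⟨hvI, hvt⟩) m hm hmax j hj)
  obtain ⟨hwJ, -⟩ := (monomial_mem_trunc_iff J t _).mp
    (hJ v ((monomial_mem_trunc_iff J t v).mpr ⟨hvJ, hvt⟩) m hm hmax j hj)
  exact (monomial_mem_trunc_iff _ t _).mpr ⟨⟨hwI, hwJ⟩, hwt⟩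

end Truncation

/-- If `I_{≥p}` and `J_{≥q}` are stable, then `(I ∩ J)_{≥ max(p,q)}` is
stable. -/
theorem stmt5 {K : Type*} [Field K] {n : ℕ}
    (I J : Ideal (MvPolynomial (Fin n) K)) (p q : ℕ)
    (hI : IsStable (trunc I p)) (hJ : IsStable (trunc J q)) :
    IsStable (trunc (I ⊓ J) (max p q)) :=
  (hI.trunc_of_le (le_max_left p q)).trunc_inf (hJ.trunc_of_le (le_max_right p q))
end
end

section
/- Let I(H) = (x^{b_1},...,x^{b_s}) be the inclusion ideal of a uniformly increasing hypergraph with edges E_1 ⊂ E_2 ⊂ ... ⊂ E_s, and let I^{[*]}(H) = ∩_{i=1}^s m^{a∖b_i} be its special dual (Alexander dual with respect to the containment vector a). Then the set of associated primes Ass(S/I^{[*]}(H)) is totally ordered by inclusion. -/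
open MvPolynomial

noncomputable section

/-- The containment vector of a hypergraph with edges `E`: `a j` is the number of
edges containing the vertex `j`. -/
def contVec {n s : ℕ} (E : Fin s → Finset (Fin n)) (j : Fin n) : ℕ :=
  (Finset.univ.filter fun i : Fin s => j ∈ E i).card

/-- The exponent vector `b_i` of the `i`-th minimal generator
`x^{b_i} = ∏_{x ∈ E_i} x^{s-i+1}` of the inclusion ideal (here `i : Fin s` is
zero-based, so the exponent is `s - i`). -/
def expVec {n s : ℕ} (E : Fin s → Finset (Fin n)) (i : Fin s) : Fin n →₀ ℕ :=
  Finsupp.ofSupportFinite (fun j => if j ∈ E i then s - i.val else 0) (Set.toFinite _)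

/-- The inclusion ideal `I(H)` of a uniformly increasing hypergraph. -/
def inclIdeal (K : Type*) [Field K] {n s : ℕ} (E : Fin s → Finset (Fin n)) :
    Ideal (MvPolynomial (Fin n) K) :=
  Ideal.span (Set.range fun i : Fin s => monomial (expVec E i) (1 : K))

/-- The special dual `I^{[*]}(H) = ⋂_i m^{a∖b_i}`: the Alexander dual of the inclusion
ideal with respect to the containment vector `a`. -/
def specialDual (K : Type*) [Field K] {n s : ℕ} (E : Fin s → Finset (Fin n)) :
    Ideal (MvPolynomial (Fin n) K) :=
  ⨅ i : Fin s, Ideal.span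
    ((fun j => (X j : MvPolynomial (Fin n) K) ^ (contVec E j + 1 - expVec E i j)) ''
      (E i : Set (Fin n)))

/-!
Put `Jᵢ = (x_j ^ c_{ij} : j ∈ Eᵢ)`, `I = ⋂ᵢ Jᵢ` and `Pᵢ = (x_j : j ∈ Eᵢ)`; every associated
prime of `S ⧸ I` is one of the `Pᵢ`, and these form a chain. Write the prime as `√(I : x)` and let
`m` be least with `x ∉ Jₘ`. For `t ∈ Eₘ` a power of `x_t` multiplies `x` into every `Jᵢ`: for
`i < m` because `x ∈ Jᵢ`, for `i ≥ m` because `t ∈ Eᵢ`. Conversely `Jₘ` is `Pₘ`-primary: if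
`r ∉ Pₘ` and `x ∉ Jₘ`, the `Eₘ`-free part of `r` times the part of `x` sharing the `Eₘ`-exponents
of a monomial of least `Eₘ`-degree outside `Jₘ` is nonzero, and on its monomials, all outside
`Jₘ`, its coefficients are those of `r * x`.
-/

namespace MvPolynomial
variable {σ R : Type*} [CommSemiring R]

def filter (q : (σ →₀ ℕ) → Prop) [DecidablePred q] (p : MvPolynomial σ R) : MvPolynomial σ R :=
  AddMonoidAlgebra.ofCoeff ((AddMonoidAlgebra.coeff p).filter q)

theorem coeff_filter (q : (σ →₀ ℕ) → Prop) [DecidablePred q] (p : MvPolynomial σ R) (ν : σ →₀ ℕ) :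
    coeff ν (p.filter q) = if q ν then coeff ν p else 0 :=
  Finsupp.filter_apply ..

theorem mem_support_filter {q : (σ →₀ ℕ) → Prop} [DecidablePred q] {p : MvPolynomial σ R}
    {ν : σ →₀ ℕ} : ν ∈ (p.filter q).support ↔ ν ∈ p.support ∧ q ν := by
  simp only [mem_support_iff, coeff_filter]
  split_ifs with h <;> simp [h]

theorem coeff_mul_filter_filter {qr qx : (σ →₀ ℕ) → Prop} [DecidablePred qr] [DecidablePred qx]
    {r x : MvPolynomial σ R} {ν : σ →₀ ℕ}
    (h : ∀ a ∈ r.support, ∀ b ∈ x.support, a + b = ν → qr a ∧ qx b) :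
    coeff ν (r.filter qr * x.filter qx) = coeff ν (r * x) := by
  classical
  simp only [coeff_mul]
  refine Finset.sum_congr rfl fun ab hab => ?_
  simp only [coeff_filter]
  by_cases hr : coeff ab.1 r = 0
  · simp [hr]
  by_cases hx : coeff ab.2 x = 0
  · simp [hx]
  obtain ⟨h1, h2⟩ := h _ (mem_support_iff.2 hr) _ (mem_support_iff.2 hx)
    (Finset.HasAntidiagonal.mem_antidiagonal.1 hab)
  simp [h1, h2]

theorem mem_ideal_span_X_pow_image {s : Set σ} {c : σ → ℕ} {f : MvPolynomial σ R} :
    f ∈ Ideal.span ((fun j => (X j : MvPolynomial σ R) ^ c j) '' s) ↔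
      ∀ μ ∈ f.support, ∃ t ∈ s, c t ≤ μ t := by
  have : (fun j => (X j : MvPolynomial σ R) ^ c j) '' s =
      (fun μ => monomial μ (1 : R)) '' ((fun j => Finsupp.single j (c j)) '' s) := by
    simp only [Set.image_image, X_pow_eq_monomial]
  simp [this, mem_ideal_span_monomial_image, Finsupp.single_le_iff]

theorem exists_mem_support_mul_forall_lt [NoZeroDivisors R] {F : Finset σ} {e : σ → ℕ}
    {r x : MvPolynomial σ R} (hr : ∃ α ∈ r.support, ∀ t ∈ F, α t = 0)
    (hx : ∃ β ∈ x.support, ∀ t ∈ F, β t < e t) :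
    ∃ ν ∈ (r * x).support, ∀ t ∈ F, ν t < e t := by
  classical
  obtain ⟨α, hα, hαF⟩ := hr
  obtain ⟨β, hβB, hβmin⟩ := Finset.exists_min_image {μ ∈ x.support | ∀ t ∈ F, μ t < e t}
    (fun μ => ∑ t ∈ F, μ t) (hx.imp fun β hβ => Finset.mem_filter.2 hβ)
  obtain ⟨hβ, hβF⟩ := Finset.mem_filter.1 hβB
  set r₀ := r.filter fun μ => ∀ t ∈ F, μ t = 0
  set x₀ := x.filter fun μ => ∀ t ∈ F, μ t = β t
  have hr₀ : r₀ ≠ 0 := ne_zero_iff.2 ⟨α, mem_support_iff.1 (mem_support_filter.2 ⟨hα, hαF⟩)⟩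
  have hx₀ : x₀ ≠ 0 :=
    ne_zero_iff.2 ⟨β, mem_support_iff.1 (mem_support_filter.2 ⟨hβ, fun _ _ => rfl⟩)⟩
  obtain ⟨ν, hν⟩ := support_nonempty.2 (mul_ne_zero hr₀ hx₀)
  have hνF : ∀ t ∈ F, ν t = β t := by
    obtain ⟨a, ha, b, hb, rfl⟩ := Finset.mem_add.1 (support_mul _ _ hν)
    intro t ht
    simp [(mem_support_filter.1 ha).2 t ht, (mem_support_filter.1 hb).2 t ht]
  have hcoeff : coeff ν (r₀ * x₀) = coeff ν (r * x) := by
    refine coeff_mul_filter_filter fun a _ b hb hab => ?_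
    have hab_apply (t : σ) : a t + b t = ν t := by rw [← hab, Finsupp.add_apply]
    have hb_le : ∀ t ∈ F, b t ≤ β t := fun t ht => hνF t ht ▸ hab_apply t ▸ Nat.le_add_left _ _
    -- `β` has least `F`-degree among the monomials of `x` below `e` on `F`, and `b` is one of them
    have hbβ : ∀ t ∈ F, b t = β t := (Finset.sum_eq_sum_iff_of_le hb_le).1 <|
      le_antisymm (Finset.sum_le_sum hb_le) <|
        hβmin b (Finset.mem_filter.2 ⟨hb, fun t ht => (hb_le t ht).trans_lt (hβF t ht)⟩)
    refine ⟨fun t ht => ?_, hbβ⟩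
    have := hab_apply t
    have := hνF t ht
    have := hbβ t ht
    omega
  exact ⟨ν, mem_support_iff.2 (hcoeff ▸ mem_support_iff.1 hν), fun t ht => hνF t ht ▸ hβF t ht⟩

theorem mul_notMem_span_X_pow_image [NoZeroDivisors R] {F : Finset σ} {c : σ → ℕ}
    {r x : MvPolynomial σ R} (hr : r ∉ Ideal.span (X '' (F : Set σ)))
    (hx : x ∉ Ideal.span ((fun j => (X j : MvPolynomial σ R) ^ c j) '' (F : Set σ))) :
    r * x ∉ Ideal.span ((fun j => (X j : MvPolynomial σ R) ^ c j) '' (F : Set σ)) := by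
  simp only [mem_ideal_span_X_image, mem_ideal_span_X_pow_image, Finset.mem_coe] at hr hx ⊢
  push Not at hr hx ⊢
  exact exists_mem_support_mul_forall_lt hr hx

theorem isPrime_span_X_image [NoZeroDivisors R] [Nontrivial R] (F : Finset σ) :
    (Ideal.span (X '' (F : Set σ)) : Ideal (MvPolynomial σ R)).IsPrime := by
  refine Ideal.isPrime_iff.2 ⟨(Ideal.ne_top_iff_one _).2 ?_, fun {r x} hrx => ?_⟩
  · simp [mem_ideal_span_X_image]
  · by_contra! h
    simp only [mem_ideal_span_X_image, Finset.mem_coe] at h hrx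
    push Not at h
    obtain ⟨ν, hν, hνF⟩ := exists_mem_support_mul_forall_lt (e := 1) h.1
      (by simpa only [Pi.one_apply, Nat.lt_one_iff] using h.2)
    obtain ⟨t, ht, hνt⟩ := hrx ν hν
    exact hνt (Nat.lt_one_iff.1 (hνF t ht))

end MvPolynomial

theorem Ideal.Quotient.mem_colon_bot_singleton_mk {A : Type*} [CommRing A] {I : Ideal A}
    {r x : A} : r ∈ (⊥ : Submodule A (A ⧸ I)).colon {Ideal.Quotient.mk I x} ↔ r * x ∈ I := by
  rw [Submodule.mem_colon_singleton, Algebra.smul_def, Ideal.Quotient.algebraMap_eq, ← map_mul,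
    Submodule.mem_bot, Ideal.Quotient.eq_zero_iff_mem]

namespace MvPolynomial
variable {σ R ι : Type*} [CommRing R] [IsDomain R] [LinearOrder ι] [Finite ι]

theorem exists_eq_span_X_image_of_mem_associatedPrimes {F : ι → Finset σ} (hF : Monotone F)
    (c : ι → σ → ℕ) {P : Ideal (MvPolynomial σ R)}
    (hP : P ∈ associatedPrimes (MvPolynomial σ R) (MvPolynomial σ R ⧸
      ⨅ i, Ideal.span ((fun j => (X j : MvPolynomial σ R) ^ c i j) '' (F i : Set σ)))) :
    ∃ m, P = Ideal.span (X '' (F m : Set σ)) := by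
  set J := fun i => Ideal.span ((fun j => (X j : MvPolynomial σ R) ^ c i j) '' (F i : Set σ))
  obtain ⟨hPprime, x, rfl⟩ := hP
  obtain ⟨x, rfl⟩ := Ideal.Quotient.mk_surjective x
  have hmem (r : MvPolynomial σ R) :
      r ∈ (⊥ : Submodule _ (_ ⧸ ⨅ i, J i)).colon {Ideal.Quotient.mk _ x} ↔ ∀ i, r * x ∈ J i := by
    rw [Ideal.Quotient.mem_colon_bot_singleton_mk, Ideal.mem_iInf]
  have hx : ∃ i, x ∉ J i := by
    by_contra! h
    exact hPprime.ne_top (Ideal.eq_top_iff_one _ |>.2 ⟨1, (hmem _).2 fun i => by simpa using h i⟩)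
  obtain ⟨m, hm, hmin⟩ := wellFounded_lt.has_min {i | x ∉ J i} hx
  refine ⟨m, le_antisymm (fun r hrad => ?_) (Ideal.span_le.2 ?_)⟩
  · obtain ⟨k, hk⟩ := Ideal.mem_radical_iff.1 hrad
    by_contra hr
    exact mul_notMem_span_X_pow_image (fun h => hr ((isPrime_span_X_image _).mem_of_pow_mem _ h))
      hm ((hmem _).1 hk m)
  · rintro _ ⟨t, ht, rfl⟩
    have := Fintype.ofFinite ι
    refine Ideal.mem_radical_iff.2 ⟨∑ i, c i t, (hmem _).2 fun i => ?_⟩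
    by_cases hxi : x ∈ J i
    · exact Ideal.mul_mem_left _ _ hxi
    · refine Ideal.mul_mem_right _ _ (Ideal.mem_of_dvd _ (pow_dvd_pow _ ?_)
        (Ideal.subset_span ⟨t, hF (not_lt.1 (hmin i hxi)) ht, rfl⟩))
      exact Finset.single_le_sum (f := (c · t)) (fun _ _ => Nat.zero_le _) (Finset.mem_univ i)

end MvPolynomial

theorem stmt8_general {K : Type*} [Field K]
    {n s : ℕ} (E : Fin s → Finset (Fin n))
    (hmono : Monotone E) :
    ∀ P ∈ associatedPrimes (MvPolynomial (Fin n) K)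
        (MvPolynomial (Fin n) K ⧸ specialDual K E),
      ∀ Q ∈ associatedPrimes (MvPolynomial (Fin n) K)
        (MvPolynomial (Fin n) K ⧸ specialDual K E),
      P ≤ Q ∨ Q ≤ P := by
  intro P hP Q hQ
  obtain ⟨m, rfl⟩ := exists_eq_span_X_image_of_mem_associatedPrimes hmono
    (fun i j => contVec E j + 1 - expVec E i j) hP
  obtain ⟨m', rfl⟩ := exists_eq_span_X_image_of_mem_associatedPrimes hmono
    (fun i j => contVec E j + 1 - expVec E i j) hQ
  rcases le_total m m' with h | h
  · exact Or.inl (Ideal.span_mono (Set.image_mono (Finset.coe_subset.2 (hmono h))))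
  · exact Or.inr (Ideal.span_mono (Set.image_mono (Finset.coe_subset.2 (hmono h))))

/-- The associated primes of `S / I^{[*]}(H)` are totally ordered by
inclusion, where `I^{[*]}(H)` is the special dual of the inclusion ideal of a
uniformly increasing hypergraph. -/
theorem stmt8 {K : Type*} [Field K]
    {n s d : ℕ} (E : Fin s → Finset (Fin n)) (hs : 0 < s) (hd : 1 ≤ d)
    (hmono : Monotone E) (hcard1 : 2 ≤ (E ⟨0, hs⟩).card)
    (hstep : ∀ i : Fin s, ∀ h : i.val + 1 < s, (E ⟨i.val + 1, h⟩).card = (E i).card + d) :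
    ∀ P ∈ associatedPrimes (MvPolynomial (Fin n) K)
        (MvPolynomial (Fin n) K ⧸ specialDual K E),
      ∀ Q ∈ associatedPrimes (MvPolynomial (Fin n) K)
        (MvPolynomial (Fin n) K ⧸ specialDual K E),
      P ≤ Q ∨ Q ≤ P :=
  stmt8_general E hmono
end
end

section
/- Let I(H) be the inclusion ideal of a uniformly increasing hypergraph H on n vertices with containment vector a = (a_1,...,a_n) (ordered so that a_1 ≥ a_2 ≥ ... ≥ a_n), and let I^{[*]}(H) be its special dual. Then the ideal (I^{[*]}(H))_{≥t} is stable, where t = a_2 + a_3 + ... + a_n. -/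
open MvPolynomial

noncomputable section

open Finset Finsupp

lemma trunc_le {K : Type*} [Field K] {n : ℕ} (I : Ideal (MvPolynomial (Fin n) K)) (t : ℕ) :
    trunc I t ≤ I :=
  Ideal.span_le.mpr fun _ ⟨_, hp, hpI, _⟩ => hp ▸ hpI

lemma le_degree_of_monomial_mem_trunc {K : Type*} [Field K] {n : ℕ}
    {I : Ideal (MvPolynomial (Fin n) K)} {t : ℕ} {v : Fin n →₀ ℕ}
    (hv : monomial v (1 : K) ∈ trunc I t) : t ≤ v.degree := by
  have hle : trunc I t ≤
      Ideal.span ((fun w => monomial w (1 : K)) '' {w : Fin n →₀ ℕ | t ≤ w.degree}) :=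
    Ideal.span_mono fun _ ⟨w, hp, _, hw⟩ => ⟨w, hw, hp.symm⟩
  obtain ⟨w, hw, hwv⟩ := mem_ideal_span_monomial_image.mp (hle hv) v
    (by classical simp [support_monomial])
  exact hw.trans (degree_mono hwv)

lemma monomial_mem_trunc {K : Type*} [Field K] {n : ℕ}
    {I : Ideal (MvPolynomial (Fin n) K)} {t : ℕ} {v : Fin n →₀ ℕ}
    (hv : monomial v (1 : K) ∈ I) (ht : t ≤ v.degree) : monomial v (1 : K) ∈ trunc I t :=
  Ideal.subset_span ⟨v, rfl, hv, ht⟩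

lemma monomial_mem_span_X_pow_image_iff {σ K : Type*} [Field K] (v : σ →₀ ℕ)
    (e : σ → ℕ) (S : Set σ) :
    monomial v (1 : K) ∈ Ideal.span ((fun j => (X j : MvPolynomial σ K) ^ e j) '' S)
      ↔ ∃ j ∈ S, e j ≤ v j := by
  have himg : (fun j => (X j : MvPolynomial σ K) ^ e j) '' S
      = (fun w => monomial w (1 : K)) '' ((fun j => single j (e j)) '' S) := by
    rw [Set.image_image]
    exact Set.image_congr fun j _ => X_pow_eq_monomial
  classical
  rw [himg, mem_ideal_span_monomial_image]
  simp [support_monomial, single_le_iff]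

lemma exists_le_of_sum_erase_le {ι : Type*} [Fintype ι] [DecidableEq ι] {a u : ι → ℕ}
    {i₀ : ι} (h₀ : a i₀ < Fintype.card ι) (h : ∑ i ∈ univ.erase i₀, a i ≤ ∑ i, u i) :
    ∃ i, a i ≤ u i := by
  by_contra! hlt
  have hsum : ∑ i, (u i + 1) ≤ ∑ i, a i := sum_le_sum fun i _ => hlt i
  rw [sum_add_distrib, ← add_sum_erase _ a (mem_univ i₀)] at hsum
  simp only [sum_const, card_univ, smul_eq_mul, mul_one] at hsum
  omega

lemma degree_shift {ι : Type*} {v : ι →₀ ℕ} {m : ι} (hm : m ∈ v.support) (j : ι) :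
    (v - single m 1 + single j 1).degree = v.degree := by
  have hmv : single m 1 ≤ v :=
    single_le_iff.mpr (Nat.one_le_iff_ne_zero.mpr (mem_support_iff.mp hm))
  conv_rhs => rw [← tsub_add_cancel_of_le hmv]
  simp only [map_add, degree_single]

-- If the shifted exponent `u` failed the condition at level `c`, the witness of `v` would have to
-- be `m`, so by antitonicity `u k < a k` for all `k ≤ m`, while `u k = 0 < a k` beyond `m`.
-- Entrywise below `a` is impossible in degree `∑_{i ≠ i₀} a i`, because `a i₀ < |ι|`.
theorem exists_witness_shift {ι : Type*} [LinearOrder ι] [Fintype ι] {a : ι → ℕ}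
    (ha : Antitone a) (ha₁ : ∀ i, 1 ≤ a i) {i₀ : ι} (h₀ : a i₀ < Fintype.card ι)
    {v : ι →₀ ℕ} (hdeg : ∑ i ∈ univ.erase i₀, a i ≤ v.degree) {m j : ι} (hm : m ∈ v.support)
    (hmax : ∀ i ∈ v.support, i ≤ m) (hjm : j < m) {c : ℕ} (hc : 1 ≤ c)
    (hv : ∃ k, c ≤ a k ∧ a k + 1 - c ≤ v k) :
    ∃ k, c ≤ a k ∧ a k + 1 - c ≤ (v - single m 1 + single j 1 : ι →₀ ℕ) k := by
  set u : ι →₀ ℕ := v - single m 1 + single j 1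
  have hu : ∀ k, u k = v k - (if m = k then 1 else 0) + (if j = k then 1 else 0) := fun k => by
    simp only [u, Finsupp.coe_add, Finsupp.coe_tsub, Pi.add_apply, Pi.sub_apply,
      single_apply]
  by_contra! hfail
  have hcm : c ≤ a m := by
    obtain ⟨k₀, hck₀, hk₀⟩ := hv
    obtain rfl : k₀ = m := by
      by_contra hne
      have := hfail k₀ hck₀
      rw [hu, if_neg (Ne.symm hne)] at this
      omega
    exact hck₀
  have hlt : ∀ k, u k < a k := by
    intro k
    rcases le_or_gt k m with hk | hk
    · have := hfail k (hcm.trans (ha hk))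
      omega
    · have hvk : v k = 0 := notMem_support_iff.mp fun hks => (hmax k hks).not_gt hk
      rw [hu, if_neg hk.ne, if_neg (hjm.trans hk).ne, hvk]
      exact ha₁ k
  obtain ⟨k, hk⟩ := exists_le_of_sum_erase_le (u := u) h₀
    (by rwa [← degree_eq_sum, degree_shift hm])
  exact (hlt k).not_ge hk

section Hypergraph

variable {n s : ℕ} {E : Fin s → Finset (Fin n)}

lemma mem_iff_le_contVec (hmono : Monotone E) (i : Fin s) (j : Fin n) :
    j ∈ E i ↔ s - i ≤ contVec E j := by
  constructor
  · intro hj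
    have hsub : Ici i ⊆ univ.filter fun i' => j ∈ E i' := fun i' hi' =>
      mem_filter.mpr ⟨mem_univ _, hmono (mem_Ici.mp hi') hj⟩
    rw [← Fin.card_Ici]
    exact card_le_card hsub
  · intro hle
    by_contra hj
    have hsub : (univ.filter fun i' => j ∈ E i') ⊆ Ioi i := fun i' hi' =>
      mem_Ioi.mpr (lt_of_not_ge fun hle' => hj (hmono hle' (mem_filter.mp hi').2))
    have := card_le_card hsub
    rw [Fin.card_Ioi] at this
    unfold contVec at hle
    omega

lemma expVec_apply_of_mem {i : Fin s} {j : Fin n} (hj : j ∈ E i) :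
    expVec E i j = s - i := by
  simp [expVec, ofSupportFinite_coe, hj]

lemma monomial_mem_specialDual_iff {K : Type*} [Field K] (hmono : Monotone E)
    (v : Fin n →₀ ℕ) :
    monomial v (1 : K) ∈ specialDual K E ↔
      ∀ i : Fin s, ∃ k, s - i ≤ contVec E k ∧ contVec E k + 1 - (s - i) ≤ v k := by
  rw [specialDual, Submodule.mem_iInf]
  refine forall_congr' fun i => ?_
  rw [monomial_mem_span_X_pow_image_iff]
  refine exists_congr fun k => ?_
  rw [Finset.mem_coe, mem_iff_le_contVec hmono]
  exact and_congr_right fun hk => by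
    rw [expVec_apply_of_mem ((mem_iff_le_contVec hmono i k).mpr hk)]

lemma contVec_antitone (hinit : ∀ i : Fin s, ∀ j k : Fin n, j ≤ k → k ∈ E i → j ∈ E i) :
    Antitone (contVec E) := fun _ _ hjk =>
  card_le_card (monotone_filter_right _ fun i _ => hinit i _ _ hjk)

lemma contVec_le (j : Fin n) : contVec E j ≤ s :=
  (card_filter_le _ _).trans_eq (card_fin s)

lemma one_le_contVec (hs : 0 < s) (hmono : Monotone E)
    (hlast : E ⟨s - 1, by omega⟩ = Finset.univ) (k : Fin n) : 1 ≤ contVec E k := by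
  have := (mem_iff_le_contVec hmono ⟨s - 1, by omega⟩ k).mp (hlast ▸ mem_univ k)
  simp only at this
  omega

lemma add_two_le_card {d : ℕ} (hs : 0 < s) (hd : 1 ≤ d) (hcard1 : 2 ≤ (E ⟨0, hs⟩).card)
    (hstep : ∀ i : Fin s, ∀ h : i.val + 1 < s, (E ⟨i.val + 1, h⟩).card = (E i).card + d)
    (i : Fin s) : i.val + 2 ≤ (E i).card := by
  obtain ⟨t, ht⟩ := i
  induction t with
  | zero => exact hcard1
  | succ t ih =>
    have := ih (by omega)
    rw [hstep ⟨t, by omega⟩ ht]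
    dsimp only at this ⊢
    omega

lemma num_edges_lt_num_vertices {d : ℕ} (hs : 0 < s) (hd : 1 ≤ d)
    (hcard1 : 2 ≤ (E ⟨0, hs⟩).card)
    (hstep : ∀ i : Fin s, ∀ h : i.val + 1 < s, (E ⟨i.val + 1, h⟩).card = (E i).card + d)
    (hlast : E ⟨s - 1, by omega⟩ = Finset.univ) : s < n := by
  have := add_two_le_card hs hd hcard1 hstep ⟨s - 1, by omega⟩
  rw [hlast, card_fin] at this
  simp only at this
  omega

end Hypergraph

/-- For the special dual `I^{[*]}(H)` of the inclusion ideal of a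
uniformly increasing hypergraph with containment vector `a` (ordered decreasingly,
which holds when vertices are ordered so that each edge is an initial segment and
`E_s = X`), the ideal `(I^{[*]}(H))_{≥t}` is stable, where `t = a_2 + ⋯ + a_n`. -/
theorem stmt11 {K : Type*} [Field K]
    {n s d : ℕ} (E : Fin s → Finset (Fin n)) (hs : 0 < s) (hd : 1 ≤ d)
    (hmono : Monotone E) (hcard1 : 2 ≤ (E ⟨0, hs⟩).card)
    (hstep : ∀ i : Fin s, ∀ h : i.val + 1 < s, (E ⟨i.val + 1, h⟩).card = (E i).card + d)
    (hn : 0 < n)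
    (hinit : ∀ i : Fin s, ∀ j k : Fin n, j ≤ k → k ∈ E i → j ∈ E i)
    (hlast : E ⟨s - 1, by omega⟩ = Finset.univ) :
    IsStable (trunc (specialDual K E)
      (∑ j ∈ Finset.univ.erase (⟨0, hn⟩ : Fin n), contVec E j)) := by
  intro v hv m hm hmax j hjm
  have hdeg := le_degree_of_monomial_mem_trunc hv
  have hvD := (monomial_mem_specialDual_iff hmono v).mp (trunc_le _ _ hv)
  have hsn : contVec E ⟨0, hn⟩ < Fintype.card (Fin n) :=
    (contVec_le _).trans_lt ((num_edges_lt_num_vertices hs hd hcard1 hstep hlast).trans_eq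
      (Fintype.card_fin n).symm)
  refine monomial_mem_trunc ((monomial_mem_specialDual_iff hmono _).mpr fun i => ?_)
    (by rwa [degree_shift hm])
  exact exists_witness_shift (contVec_antitone hinit) (one_le_contVec hs hmono hlast) hsn hdeg
    hm hmax hjm (by omega) (hvD i)
end
end

section
/- Let H be a uniformly increasing hypergraph with s edges on n vertices and increment d, with |E_1| = e_1. Then n ≥ e_1 + (s-1)d and the generator x^{b_i} of the inclusion ideal has total degree (s - i + 1)(e_1 + (i-1)d); in particular deg(I(H)), the maximum degree of a minimal generator, equals max over 1 ≤ i ≤ s of (s - i + 1)(e_1 + (i-1)d). -/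
open MvPolynomial

noncomputable section

theorem Fin.eq_add_mul_of_succ_eq_add {s d : ℕ} (c : Fin s → ℕ) (hs : 0 < s)
    (hstep : ∀ i : Fin s, ∀ h : i.val + 1 < s, c ⟨i.val + 1, h⟩ = c i + d) :
    ∀ i : Fin s, c i = c ⟨0, hs⟩ + i.val * d := by
  rintro ⟨k, hk⟩
  induction k with
  | zero => simp
  | succ k ih =>
    rw [hstep ⟨k, by omega⟩ hk, ih (by omega)]
    ring

theorem expVec_sum {n s : ℕ} (E : Fin s → Finset (Fin n)) (i : Fin s) :
    ((expVec E i).sum fun _ m => m) = (s - i.val) * (E i).card := by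
  rw [Finsupp.sum_fintype _ _ fun _ => rfl]
  change ∑ j, (if j ∈ E i then s - i.val else 0) = _
  rw [Finset.sum_ite_mem, Finset.univ_inter, Finset.sum_const, smul_eq_mul, Nat.mul_comm]

theorem stmt18_general
    {n s d : ℕ} (E : Fin s → Finset (Fin n)) (hs : 0 < s)
    (hstep : ∀ i : Fin s, ∀ h : i.val + 1 < s, (E ⟨i.val + 1, h⟩).card = (E i).card + d) :
    (E ⟨0, hs⟩).card + (s - 1) * d ≤ n ∧
      (∀ i : Fin s, ((expVec E i).sum fun _ m => m)
          = (s - i.val) * ((E ⟨0, hs⟩).card + i.val * d)) ∧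
      (Finset.univ.sup fun i : Fin s => (expVec E i).sum fun _ m => m)
        = Finset.univ.sup fun i : Fin s =>
            (s - i.val) * ((E ⟨0, hs⟩).card + i.val * d) := by
  have hcard := Fin.eq_add_mul_of_succ_eq_add (fun i => (E i).card) hs hstep
  have hdeg : ∀ i : Fin s, ((expVec E i).sum fun _ m => m)
      = (s - i.val) * ((E ⟨0, hs⟩).card + i.val * d) := fun i => by
    rw [expVec_sum, hcard i]
  refine ⟨?_, hdeg, Finset.sup_congr rfl fun i _ => hdeg i⟩
  calc (E ⟨0, hs⟩).card + (s - 1) * d = (E ⟨s - 1, by omega⟩).card :=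
      (hcard ⟨s - 1, by omega⟩).symm
    _ ≤ n := by simpa using (E _).card_le_univ

/-- For a uniformly increasing hypergraph with `s` edges on `n`
vertices, increment `d` and `|E_1| = e_1`: `n ≥ e_1 + (s-1)d`, the generator
`x^{b_i}` has total degree `(s - i + 1)(e_1 + (i-1)d)` (zero-based:
`(s - i)(e_1 + i·d)`), and `deg I(H)` is the maximum of these values. -/
theorem stmt18
    {n s d : ℕ} (E : Fin s → Finset (Fin n)) (hs : 0 < s) (hd : 1 ≤ d)
    (hmono : Monotone E) (hcard1 : 2 ≤ (E ⟨0, hs⟩).card)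
    (hstep : ∀ i : Fin s, ∀ h : i.val + 1 < s, (E ⟨i.val + 1, h⟩).card = (E i).card + d) :
    (E ⟨0, hs⟩).card + (s - 1) * d ≤ n ∧
      (∀ i : Fin s, ((expVec E i).sum fun _ m => m)
          = (s - i.val) * ((E ⟨0, hs⟩).card + i.val * d)) ∧
      (Finset.univ.sup fun i : Fin s => (expVec E i).sum fun _ m => m)
        = Finset.univ.sup fun i : Fin s =>
            (s - i.val) * ((E ⟨0, hs⟩).card + i.val * d) :=
  stmt18_general E hs hstep
end
end
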